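/- arXiv:1307.2987 — 2 statements merged into one kernel-verified Lean document; each statement's English description precedes it below -/
import Mathlib

section
/- In a Minkowski plane with parallelogram unit ball, given three points t₁, t₂, t₃ and a fourth point s, if ‖tᵢ − s‖ + ‖tⱼ − s‖ = ‖tᵢ − tⱼ‖ for all 1 ≤ i < j ≤ 3, and s′ is any other point satisfying the same three equations, then s′ = s. That is, the tessellation point, if it exists, is unique. -/
/-!
A parallelogram norm `max |f x| |g x|` is the `ℓ¹` norm `|(f + g) x| / 2 + |(f - g) x| / 2`.
For an `ℓ¹`-type norm, equality in the triangle inequality `‖a - x‖ + ‖b - x‖ = ‖a - b‖` forces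
equality in every coordinate, and on the real line that equality says that `x` lies between `a`
and `b`. A real number lying between each pair of three reals is their median, so every
coordinate of a tessellation point is determined.
-/

open Set

def IsTessellationPoint {E : Type*} [SeminormedAddCommGroup E] (t₁ t₂ t₃ s : E) : Prop :=
  ‖t₁ - s‖ + ‖t₂ - s‖ = ‖t₁ - t₂‖ ∧ ‖t₁ - s‖ + ‖t₃ - s‖ = ‖t₁ - t₃‖ ∧
    ‖t₂ - s‖ + ‖t₃ - s‖ = ‖t₂ - t₃‖

lemma mem_uIcc_of_norm_sub_add_norm_sub_eq {a b x : ℝ} (h : ‖a - x‖ + ‖b - x‖ = ‖a - b‖) :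
    x ∈ uIcc a b := by
  rw [← segment_eq_uIcc, mem_segment_iff_wbtw, ← dist_add_dist_eq_iff]
  simpa only [dist_eq_norm, norm_sub_rev x b] using h

lemma IsTessellationPoint.eq_of_real {a b c x y : ℝ} (hx : IsTessellationPoint a b c x)
    (hy : IsTessellationPoint a b c y) : x = y := by
  obtain ⟨hxab, hxac, hxbc⟩ := hx
  obtain ⟨hyab, hyac, hybc⟩ := hy
  have := mem_uIcc_of_norm_sub_add_norm_sub_eq hxab
  have := mem_uIcc_of_norm_sub_add_norm_sub_eq hxac
  have := mem_uIcc_of_norm_sub_add_norm_sub_eq hxbc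
  have := mem_uIcc_of_norm_sub_add_norm_sub_eq hyab
  have := mem_uIcc_of_norm_sub_add_norm_sub_eq hyac
  have := mem_uIcc_of_norm_sub_add_norm_sub_eq hybc
  simp only [mem_uIcc] at *
  -- the intersection of the three intervals is the single point `median a b c`
  rcases le_total a b with _ | _ <;> rcases le_total a c with _ | _ <;>
    rcases le_total b c with _ | _ <;> grind

section SumNorm

variable {E ι : Type*} [NormedAddCommGroup E] [Fintype ι] (φ : ι → E →+ ℝ)
  (hnorm : ∀ x, ‖x‖ = ∑ i, ‖φ i x‖)
include hnorm

lemma norm_sub_add_norm_sub_eq_map_of_norm_eq_sum {a b x : E}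
    (h : ‖a - x‖ + ‖b - x‖ = ‖a - b‖) (i : ι) :
    ‖φ i a - φ i x‖ + ‖φ i b - φ i x‖ = ‖φ i a - φ i b‖ := by
  have triangle : ∀ j, ‖φ j a - φ j b‖ ≤ ‖φ j a - φ j x‖ + ‖φ j b - φ j x‖ := fun j => by
    simpa only [norm_sub_rev (φ j x)] using norm_sub_le_norm_sub_add_norm_sub (φ j a) (φ j x) (φ j b)
  have slack_sum : ∑ j, (‖φ j a - φ j x‖ + ‖φ j b - φ j x‖ - ‖φ j a - φ j b‖) = 0 := by
    simp only [hnorm, map_sub] at h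
    rw [Finset.sum_sub_distrib, Finset.sum_add_distrib, h, sub_self]
  have := (Finset.sum_eq_zero_iff_of_nonneg fun j _ => sub_nonneg.mpr (triangle j)).mp
    slack_sum i (Finset.mem_univ i)
  linarith

lemma IsTessellationPoint.map_of_norm_eq_sum {t₁ t₂ t₃ s : E}
    (hs : IsTessellationPoint t₁ t₂ t₃ s) (i : ι) :
    IsTessellationPoint (φ i t₁) (φ i t₂) (φ i t₃) (φ i s) :=
  ⟨norm_sub_add_norm_sub_eq_map_of_norm_eq_sum φ hnorm hs.1 i,
    norm_sub_add_norm_sub_eq_map_of_norm_eq_sum φ hnorm hs.2.1 i,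
    norm_sub_add_norm_sub_eq_map_of_norm_eq_sum φ hnorm hs.2.2 i⟩

lemma IsTessellationPoint.eq_of_norm_eq_sum {t₁ t₂ t₃ s s' : E}
    (hs : IsTessellationPoint t₁ t₂ t₃ s) (hs' : IsTessellationPoint t₁ t₂ t₃ s') : s = s' := by
  have hcoord : ∀ i, φ i s = φ i s' := fun i =>
    (hs.map_of_norm_eq_sum φ hnorm i).eq_of_real (hs'.map_of_norm_eq_sum φ hnorm i)
  rw [← sub_eq_zero, ← norm_eq_zero, hnorm]
  simp only [map_sub, hcoord, sub_self, norm_zero, Finset.sum_const_zero]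

end SumNorm

lemma max_abs_eq_abs_add_add_abs_sub_div_two (u v : ℝ) :
    max |u| |v| = (|u + v| + |u - v|) / 2 := by
  rcases le_total |u| |v| with h | h <;> simp only [max_eq_left, max_eq_right, h] <;>
    cases abs_cases u <;> cases abs_cases v <;> cases abs_cases (u + v) <;>
    cases abs_cases (u - v) <;> linarith

theorem stmt_7_general {E : Type*} [NormedAddCommGroup E] [NormedSpace ℝ E]
    (f g : E →ₗ[ℝ] ℝ) (hball : ∀ x : E, ‖x‖ = max |f x| |g x|)
    (t₁ t₂ t₃ s s' : E)
    (h12 : ‖t₁ - s‖ + ‖t₂ - s‖ = ‖t₁ - t₂‖)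
    (h13 : ‖t₁ - s‖ + ‖t₃ - s‖ = ‖t₁ - t₃‖)
    (h23 : ‖t₂ - s‖ + ‖t₃ - s‖ = ‖t₂ - t₃‖)
    (h12' : ‖t₁ - s'‖ + ‖t₂ - s'‖ = ‖t₁ - t₂‖)
    (h13' : ‖t₁ - s'‖ + ‖t₃ - s'‖ = ‖t₁ - t₃‖)
    (h23' : ‖t₂ - s'‖ + ‖t₃ - s'‖ = ‖t₂ - t₃‖) :
    s' = s := by
  let φ : Fin 2 → E →+ ℝ :=
    ![((2⁻¹ : ℝ) • (f + g)).toAddMonoidHom, ((2⁻¹ : ℝ) • (f - g)).toAddMonoidHom]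
  have hnorm : ∀ x, ‖x‖ = ∑ i, ‖φ i x‖ := fun x => by
    simp [φ, Fin.sum_univ_two, hball, max_abs_eq_abs_add_add_abs_sub_div_two, ← mul_add, abs_mul,
      div_eq_inv_mul]
  exact IsTessellationPoint.eq_of_norm_eq_sum φ hnorm ⟨h12', h13', h23'⟩ ⟨h12, h13, h23⟩

/-- In a Minkowski plane whose unit ball is a parallelogram (i.e. the norm is
`‖x‖ = max |f x| |g x|` for linear functionals `f, g`), a tessellation point of
three points `t₁, t₂, t₃` is unique: if both `s` and `s'` satisfy
`‖tᵢ − x‖ + ‖tⱼ − x‖ = ‖tᵢ − tⱼ‖` for all `i < j`, then `s' = s`. -/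
theorem stmt_7 {E : Type*} [NormedAddCommGroup E] [NormedSpace ℝ E]
    (hdim : Module.finrank ℝ E = 2)
    (f g : E →ₗ[ℝ] ℝ) (hball : ∀ x : E, ‖x‖ = max |f x| |g x|)
    (t₁ t₂ t₃ s s' : E)
    (h12 : ‖t₁ - s‖ + ‖t₂ - s‖ = ‖t₁ - t₂‖)
    (h13 : ‖t₁ - s‖ + ‖t₃ - s‖ = ‖t₁ - t₃‖)
    (h23 : ‖t₂ - s‖ + ‖t₃ - s‖ = ‖t₂ - t₃‖)
    (h12' : ‖t₁ - s'‖ + ‖t₂ - s'‖ = ‖t₁ - t₂‖)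
    (h13' : ‖t₁ - s'‖ + ‖t₃ - s'‖ = ‖t₁ - t₃‖)
    (h23' : ‖t₂ - s'‖ + ‖t₃ - s'‖ = ‖t₂ - t₃‖) :
    s' = s :=
  stmt_7_general f g hball t₁ t₂ t₃ s s' h12 h13 h23 h12' h13' h23'
end

section
/- In the Euclidean plane, let N = {(1, √3/2), (1, −√3/2), (−1, √3/2), (−1, −√3/2)}. The full Steiner tree with Steiner points (1/2, 0) and (−1/2, 0), where each Steiner point is joined to the two terminals on its side and the Steiner points are joined to each other, has total length 5; and the full Steiner tree with Steiner points (0, √3/2 − 1/√3) and (0, −(√3/2 − 1/√3)) (each joined to the two terminals at its end and to the other Steiner point) has total length 3√3. -/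
noncomputable def pt (x y : ℝ) : EuclideanSpace ℝ (Fin 2) := WithLp.toLp 2 ![x, y]

lemma dist_pt (a b c d : ℝ) :
    dist (pt a b) (pt c d) = Real.sqrt ((a - c) ^ 2 + (b - d) ^ 2) := by
  simp [EuclideanSpace.dist_eq, pt, Fin.sum_univ_two, Real.dist_eq, sq_abs]

lemma dist_pt_eq {a b c d r : ℝ} (hr : 0 ≤ r) (h : (a - c) ^ 2 + (b - d) ^ 2 = r ^ 2) :
    dist (pt a b) (pt c d) = r := by
  rw [dist_pt, h, Real.sqrt_sq hr]

/-- For the four terminals `(±1, ±√3/2)`: the full Steiner tree with Steiner points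
`(±1/2, 0)` has total length `5`, and the full Steiner tree with Steiner points
`(0, ±(√3/2 − 1/√3))` has total length `3√3`. -/
theorem stmt_16 :
    (dist (pt 1 (Real.sqrt 3 / 2)) (pt (1/2) 0)
      + dist (pt 1 (-(Real.sqrt 3 / 2))) (pt (1/2) 0)
      + dist (pt (-1) (Real.sqrt 3 / 2)) (pt (-(1/2)) 0)
      + dist (pt (-1) (-(Real.sqrt 3 / 2))) (pt (-(1/2)) 0)
      + dist (pt (1/2) 0) (pt (-(1/2)) 0) = 5) ∧
    (dist (pt 1 (Real.sqrt 3 / 2)) (pt 0 (Real.sqrt 3 / 2 - 1 / Real.sqrt 3))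
      + dist (pt (-1) (Real.sqrt 3 / 2)) (pt 0 (Real.sqrt 3 / 2 - 1 / Real.sqrt 3))
      + dist (pt 1 (-(Real.sqrt 3 / 2))) (pt 0 (-(Real.sqrt 3 / 2 - 1 / Real.sqrt 3)))
      + dist (pt (-1) (-(Real.sqrt 3 / 2))) (pt 0 (-(Real.sqrt 3 / 2 - 1 / Real.sqrt 3)))
      + dist (pt 0 (Real.sqrt 3 / 2 - 1 / Real.sqrt 3))
          (pt 0 (-(Real.sqrt 3 / 2 - 1 / Real.sqrt 3)))
      = 3 * Real.sqrt 3) := by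
  have hs : Real.sqrt 3 ^ 2 = 3 := Real.sq_sqrt (by norm_num)
  have inv_sqrt : 1 / Real.sqrt 3 = Real.sqrt 3 / 3 := by field_simp; linear_combination -hs
  rw [inv_sqrt]
  constructor
  · rw [dist_pt_eq (r := 1) zero_le_one (by linear_combination hs / 4),
      dist_pt_eq (r := 1) zero_le_one (by linear_combination hs / 4),
      dist_pt_eq (r := 1) zero_le_one (by linear_combination hs / 4),
      dist_pt_eq (r := 1) zero_le_one (by linear_combination hs / 4),
      dist_pt_eq (r := 1) zero_le_one (by norm_num)]
    norm_num
  · rw [dist_pt_eq (r := 2 * Real.sqrt 3 / 3) (by positivity) (by linear_combination -hs / 3),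
      dist_pt_eq (r := 2 * Real.sqrt 3 / 3) (by positivity) (by linear_combination -hs / 3),
      dist_pt_eq (r := 2 * Real.sqrt 3 / 3) (by positivity) (by linear_combination -hs / 3),
      dist_pt_eq (r := 2 * Real.sqrt 3 / 3) (by positivity) (by linear_combination -hs / 3),
      dist_pt_eq (r := Real.sqrt 3 / 3) (by positivity) (by ring)]
    ring
end
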